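/- Let ρ(e) = (1/2)‖h + Ae‖² + λ‖e + θ*‖₁ + aᵀe with A a matrix of full column rank, minimized at e*. If e is an arbitrary point and q ∈ ∂ρ(e) is any subgradient, then ‖e - e*‖₂ ≤ ‖q‖₂ / σ_min(A)². -/

import Mathlib

/-!
Since `‖A v‖ ≥ σ_min ‖v‖`, the quadratic part `e ↦ ½‖h + A e‖²` is `σ_min²`-strongly convex,
and adding the convex `ℓ¹` and linear terms keeps it so. For an `m`-strongly convex `f`, a
subgradient `q` at `x` upgrades to `f y ≥ f x + ⟪q, y - x⟫ + m/2 ‖y - x‖²`. Using this at `e`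
(with `q`) and at the minimizer `e*` (with subgradient `0`) and adding gives
`m ‖e - e*‖² ≤ ⟪q, e - e*⟫ ≤ ‖q‖ ‖e - e*‖`.
-/

open scoped RealInnerProductSpace
open Set Filter Topology

section NormedSpace

variable {E F : Type*} [NormedAddCommGroup E] [NormedSpace ℝ E]
  [NormedAddCommGroup F] [NormedSpace ℝ F]

lemma mul_norm_le_norm_apply_of_forall_sphere {σ : ℝ} (B : E →ₗ[ℝ] F)
    (hσ : ∀ w ∈ Metric.sphere (0 : E) 1, σ ≤ ‖B w‖) (v : E) : σ * ‖v‖ ≤ ‖B v‖ := by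
  rcases eq_or_ne v 0 with rfl | hv
  · simp
  have hnv : 0 < ‖v‖ := norm_pos_iff.2 hv
  have := hσ (‖v‖⁻¹ • v) (by simp [norm_smul, hnv.ne'])
  rw [map_smul, norm_smul, norm_inv, norm_norm, ← div_eq_inv_mul, le_div_iff₀ hnv] at this
  linarith

lemma StrongConvexOn.add_convexOn {s : Set E} {m : ℝ} {f g : E → ℝ}
    (hf : StrongConvexOn s m f) (hg : ConvexOn ℝ s g) : StrongConvexOn s m (f + g) := by
  simpa [StrongConvexOn] using hf.add (uniformConvexOn_zero.2 hg)

lemma StrongConvexOn.comp_add_linearMap {m σ : ℝ} {g : F → ℝ} (hg : StrongConvexOn univ m g)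
    (hm : 0 ≤ m) (hσ : 0 ≤ σ) (c : F) (B : E →ₗ[ℝ] F) (hB : ∀ v, σ * ‖v‖ ≤ ‖B v‖) :
    StrongConvexOn univ (m * σ ^ 2) (fun x ↦ g (c + B x)) := by
  refine ⟨convex_univ, fun x _ y _ a b ha hb hab ↦ ?_⟩
  have hcomb : c + B (a • x + b • y) = a • (c + B x) + b • (c + B y) := by
    rw [map_add, map_smul, map_smul, smul_add, smul_add, add_add_add_comm, Convex.combo_self hab]
  have hdiff : (c + B x) - (c + B y) = B (x - y) := by rw [map_sub]; abel
  have hsq : σ ^ 2 * ‖x - y‖ ^ 2 ≤ ‖B (x - y)‖ ^ 2 := by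
    rw [← mul_pow]; exact pow_le_pow_left₀ (by positivity) (hB _) 2
  simp only [hcomb, smul_eq_mul]
  refine (hg.2 (mem_univ _) (mem_univ _) ha hb hab).trans ?_
  simp only [hdiff, smul_eq_mul]
  have : 0 ≤ a * b * (m / 2) := by positivity
  nlinarith [mul_le_mul_of_nonneg_left hsq this]

end NormedSpace

section InnerProductSpace

variable {E : Type*} [NormedAddCommGroup E] [InnerProductSpace ℝ E]

lemma strongConvexOn_univ_half_norm_sq : StrongConvexOn univ 1 (fun x : E ↦ 1 / 2 * ‖x‖ ^ 2) :=
  strongConvexOn_iff_convex.2 <| by simpa using convexOn_const (0 : ℝ) convex_univ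

variable {m : ℝ} {f : E → ℝ} {x q : E}

lemma StrongConvexOn.add_inner_add_le (hf : StrongConvexOn univ m f)
    (hq : ∀ z, f x + ⟪q, z - x⟫ ≤ f z) (y : E) :
    f x + ⟪q, y - x⟫ + m / 2 * ‖y - x‖ ^ 2 ≤ f y := by
  -- compare `hq` with strong convexity at `(1 - t) • x + t • y`, divide by `t`, and let `t → 0⁺`
  set φ : ℝ → ℝ := fun t ↦ ⟪q, y - x⟫ + (1 - t) * (m / 2 * ‖y - x‖ ^ 2)
  have hφ : ∀ t ∈ Ioo (0 : ℝ) 1, φ t ≤ f y - f x := by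
    rintro t ⟨ht0, ht1⟩
    have hconv := hf.2 (mem_univ x) (mem_univ y) (sub_nonneg.2 ht1.le) ht0.le (sub_add_cancel 1 t)
    have hsub := hq ((1 - t) • x + t • y)
    have hz : (1 - t) • x + t • y - x = t • (y - x) := by module
    rw [hz, real_inner_smul_right] at hsub
    simp only [smul_eq_mul, norm_sub_rev x y] at hconv
    have : t * φ t ≤ t * (f y - f x) := by simp only [φ]; nlinarith
    exact le_of_mul_le_mul_left this ht0
  have hlim : Tendsto φ (𝓝[>] 0) (𝓝 (φ 0)) :=
    ((continuous_const.add ((continuous_const.sub continuous_id).mul continuous_const)).tendsto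
      0).mono_left nhdsWithin_le_nhds
  have := le_of_tendsto hlim (eventually_of_mem (Ioo_mem_nhdsGT one_pos) hφ)
  simp only [φ, sub_zero, one_mul] at this
  linarith

lemma StrongConvexOn.norm_sub_le_div_of_isMinOn (hf : StrongConvexOn univ m f) (hm : 0 < m)
    {x₀ : E} (hmin : IsMinOn f univ x₀) (hq : ∀ z, f x + ⟪q, z - x⟫ ≤ f z) :
    ‖x - x₀‖ ≤ ‖q‖ / m := by
  have hx₀ := hf.add_inner_add_le (q := 0) (fun z ↦ by simpa using isMinOn_univ_iff.1 hmin z) x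
  have hx := hf.add_inner_add_le hq x₀
  have hcs : ⟪q, x - x₀⟫ ≤ ‖q‖ * ‖x - x₀‖ := real_inner_le_norm q (x - x₀)
  rw [← neg_sub x x₀, inner_neg_right, norm_neg] at hx
  simp only [inner_zero_left, add_zero] at hx₀
  have key : m * ‖x - x₀‖ * ‖x - x₀‖ ≤ ‖q‖ * ‖x - x₀‖ := by nlinarith
  rw [le_div_iff₀ hm]
  rcases (norm_nonneg (x - x₀)).eq_or_lt with h0 | hpos
  · rw [← h0, zero_mul]; exact norm_nonneg q
  · linarith [le_of_mul_le_mul_right key hpos]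

end InnerProductSpace

lemma convexOn_univ_sum_abs_add {ι : Type*} [Fintype ι] (θ : EuclideanSpace ℝ ι) :
    ConvexOn ℝ univ (fun x : EuclideanSpace ℝ ι ↦ ∑ i, |x i + θ i|) := by
  have hterm : ∀ i, ConvexOn ℝ univ (fun x : EuclideanSpace ℝ ι ↦ |x i + θ i|) := fun i ↦ by
    simpa [Function.comp_def] using
      (convexOn_univ_norm.translate_left (θ i)).comp_linearMap (EuclideanSpace.proj i).toLinearMap
  simpa only [Finset.sum_fn] using
    Finset.sum_induction _ (ConvexOn ℝ univ) (fun _ _ ↦ ConvexOn.add) (convexOn_const 0 convex_univ)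
      fun i _ ↦ hterm i

/-- Distance to the minimizer of a LASSO-type objective
`ρ(e) = (1/2)‖h + Ae‖² + λ‖e + θ*‖₁ + aᵀe` in terms of a subgradient:
if `q ∈ ∂ρ(e)` then `‖e - e*‖ ≤ ‖q‖ / σ_min(A)²`, where `A` has full column
rank (`σ_min(A) > 0`). -/
theorem lasso_subgradient_distance_bound
    (nn mm : ℕ) (A : Matrix (Fin nn) (Fin mm) ℝ)
    (h : EuclideanSpace ℝ (Fin nn)) (θs a : EuclideanSpace ℝ (Fin mm))
    (lam : ℝ) (hlam : 0 ≤ lam)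
    (ρ : EuclideanSpace ℝ (Fin mm) → ℝ)
    (hρ : ∀ e, ρ e =
      1 / 2 * ‖h + (WithLp.equiv 2 (Fin nn → ℝ)).symm (A.mulVec e)‖ ^ 2 +
      lam * ∑ i, |e i + θs i| + ⟪a, e⟫)
    (σmin : ℝ) (hpos : 0 < σmin)
    (hσmin : IsGLB {r : ℝ | ∃ w ∈ Metric.sphere (0 : EuclideanSpace ℝ (Fin mm)) 1,
      r = ‖(WithLp.equiv 2 (Fin nn → ℝ)).symm (A.mulVec w)‖} σmin)
    (estar : EuclideanSpace ℝ (Fin mm)) (hmin : IsMinOn ρ Set.univ estar)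
    (e q : EuclideanSpace ℝ (Fin mm))
    (hq : ∀ z, ρ z ≥ ρ e + ⟪q, z - e⟫) :
    ‖e - estar‖ ≤ ‖q‖ / σmin ^ 2 := by
  have hA : ∀ v, σmin * ‖v‖ ≤ ‖Matrix.toEuclideanLin A v‖ :=
    mul_norm_le_norm_apply_of_forall_sphere _ fun w hw ↦ hσmin.1 ⟨w, hw, rfl⟩
  have hquad := strongConvexOn_univ_half_norm_sq.comp_add_linearMap zero_le_one hpos.le h _ hA
  rw [one_mul] at hquad
  have hρconv : StrongConvexOn univ (σmin ^ 2) ρ := by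
    rw [funext hρ]
    exact (hquad.add_convexOn ((convexOn_univ_sum_abs_add θs).smul hlam)).add_convexOn
      ((innerₛₗ ℝ a).convexOn convex_univ)
  exact hρconv.norm_sub_le_div_of_isMinOn (by positivity) hmin hq
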